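/- arXiv:1810.08746 — 2 statements merged into one kernel-verified Lean document; each statement's English description precedes it below -/
import Mathlib

section
/- Let M be a real symmetric positive definite n×n matrix, S a real symmetric positive semidefinite n×n matrix, and δ a real number. If ā ∈ ℝⁿ solves the weak-form differential filter system (M + δ² S) ā = M a for a given a ∈ ℝⁿ, then āᵀ M ā + δ² āᵀ S ā = āᵀ M a, and consequently āᵀ M ā ≤ aᵀ M a, i.e., the filter is nonexpansive in the M-weighted norm ‖x‖_M = √(xᵀ M x). -/
open Matrix

/-!
Testing the filter equation `(M + δ² S) ā = M a` against `ā` gives the energy identity, and since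
`δ² āᵀ S ā ≥ 0` it yields `āᵀ M ā ≤ āᵀ M a`. The cross term is controlled by expanding
`0 ≤ (a - ā)ᵀ M (a - ā)`, i.e. `2 āᵀ M a ≤ āᵀ M ā + aᵀ M a`; combining the two inequalities gives
`āᵀ M ā ≤ aᵀ M a`.
-/

variable {ι R : Type*} [Fintype ι]

theorem Matrix.IsSymm.dotProduct_mulVec_comm [CommSemiring R] {M : Matrix ι ι R} (hM : M.IsSymm)
    (x y : ι → R) : x ⬝ᵥ (M *ᵥ y) = y ⬝ᵥ (M *ᵥ x) := by
  rw [dotProduct_mulVec, ← mulVec_transpose, hM.eq, dotProduct_comm]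

theorem Matrix.PosSemidef.two_mul_dotProduct_mulVec_le {M : Matrix ι ι ℝ} (hM : M.PosSemidef)
    (x y : ι → ℝ) : 2 * (x ⬝ᵥ (M *ᵥ y)) ≤ x ⬝ᵥ (M *ᵥ x) + y ⬝ᵥ (M *ᵥ y) := by
  have hsymm : y ⬝ᵥ (M *ᵥ x) = x ⬝ᵥ (M *ᵥ y) :=
    (isHermitian_iff_isSymm.mp hM.isHermitian).dotProduct_mulVec_comm y x
  have hdiff : 0 ≤ (x - y) ⬝ᵥ (M *ᵥ (x - y)) := by
    simpa using hM.dotProduct_mulVec_nonneg (x - y)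
  simp only [mulVec_sub, sub_dotProduct, dotProduct_sub, hsymm] at hdiff
  linarith

theorem Matrix.dotProduct_mulVec_add_smul_of_mulVec_eq [CommRing R] {M S : Matrix ι ι R} {c : R}
    {a x : ι → R} (hx : (M + c • S) *ᵥ x = M *ᵥ a) :
    x ⬝ᵥ (M *ᵥ x) + c * (x ⬝ᵥ (S *ᵥ x)) = x ⬝ᵥ (M *ᵥ a) := by
  simpa [add_mulVec, smul_mulVec, dotProduct_add, dotProduct_smul] using congrArg (x ⬝ᵥ ·) hx

/-- If `ā` solves the weak-form differential filter system `(M + δ² S) ā = M a`, then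
`āᵀ M ā + δ² āᵀ S ā = āᵀ M a`, and consequently `āᵀ M ā ≤ aᵀ M a`, i.e. the filter is
nonexpansive in the `M`-weighted norm `‖x‖_M = √(xᵀ M x)`. -/
theorem df_nonexpansive {n : ℕ}
    (M S : Matrix (Fin n) (Fin n) ℝ)
    (hM : M.PosDef) (hS : S.PosSemidef) (δ : ℝ)
    (a abar : Fin n → ℝ)
    (hsol : (M + δ ^ 2 • S) *ᵥ abar = M *ᵥ a) :
    abar ⬝ᵥ (M *ᵥ abar) + δ ^ 2 * (abar ⬝ᵥ (S *ᵥ abar)) = abar ⬝ᵥ (M *ᵥ a) ∧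
    abar ⬝ᵥ (M *ᵥ abar) ≤ a ⬝ᵥ (M *ᵥ a) ∧
    Real.sqrt (abar ⬝ᵥ (M *ᵥ abar)) ≤ Real.sqrt (a ⬝ᵥ (M *ᵥ a)) := by
  have henergy := dotProduct_mulVec_add_smul_of_mulVec_eq hsol
  have hSnonneg : 0 ≤ δ ^ 2 * (abar ⬝ᵥ (S *ᵥ abar)) :=
    mul_nonneg (sq_nonneg δ) (by simpa using hS.dotProduct_mulVec_nonneg abar)
  have hcross := hM.posSemidef.two_mul_dotProduct_mulVec_le abar a
  have hle : abar ⬝ᵥ (M *ᵥ abar) ≤ a ⬝ᵥ (M *ᵥ a) := by linarith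
  exact ⟨henergy, hle, Real.sqrt_le_sqrt hle⟩
end

section
/- Let M be a real symmetric positive definite n×n matrix, S a real symmetric positive semidefinite n×n matrix, δ a real number, and m ≥ 1 a natural number. If ā ∈ ℝⁿ solves the weak-form higher-order differential filter system (M + δ² S^m) ā = M a for a given a ∈ ℝⁿ, then āᵀ M ā ≤ aᵀ M a, i.e., HODF version 2 is nonexpansive in the M-weighted norm ‖x‖_M = √(xᵀ M x). -/
open Matrix

/-!
Dotting the filter equation `(M + K) ā = M a` with `ā` gives `āᵀ M a = āᵀ M ā + āᵀ K ā ≥ āᵀ M ā`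
for positive semidefinite `K = δ² Sᵐ`. Expanding `0 ≤ (a - ā)ᵀ M (a - ā)` with `M` symmetric then yields
`aᵀ M a ≥ 2 āᵀ M a - āᵀ M ā ≥ āᵀ M ā`.
-/

namespace Matrix

variable {ι : Type*} [Fintype ι]

lemma IsSymm.dotProduct_mulVec_comm_s5 {M : Matrix ι ι ℝ} (hM : M.IsSymm) (x y : ι → ℝ) :
    x ⬝ᵥ (M *ᵥ y) = y ⬝ᵥ (M *ᵥ x) := by
  rw [dotProduct_mulVec, ← mulVec_transpose, hM.eq, dotProduct_comm]

lemma IsSymm.dotProduct_mulVec_sub_sub {M : Matrix ι ι ℝ} (hM : M.IsSymm) (x y : ι → ℝ) :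
    (x - y) ⬝ᵥ (M *ᵥ (x - y)) = x ⬝ᵥ (M *ᵥ x) - 2 * (y ⬝ᵥ (M *ᵥ x)) + y ⬝ᵥ (M *ᵥ y) := by
  rw [mulVec_sub, sub_dotProduct, dotProduct_sub, dotProduct_sub, hM.dotProduct_mulVec_comm_s5 x y]
  ring

lemma PosSemidef.dotProduct_mulVec_self_nonneg {M : Matrix ι ι ℝ} (hM : M.PosSemidef)
    (x : ι → ℝ) : 0 ≤ x ⬝ᵥ (M *ᵥ x) :=
  hM.dotProduct_mulVec_nonneg x

lemma PosSemidef.dotProduct_mulVec_le_of_add_mulVec_eq {M K : Matrix ι ι ℝ}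
    (hM : M.PosSemidef) (hK : K.PosSemidef) {x y : ι → ℝ} (h : (M + K) *ᵥ y = M *ᵥ x) :
    y ⬝ᵥ (M *ᵥ y) ≤ x ⬝ᵥ (M *ᵥ x) := by
  have hsymm : M.IsSymm := hM.isHermitian
  have hcross : y ⬝ᵥ (M *ᵥ x) = y ⬝ᵥ (M *ᵥ y) + y ⬝ᵥ (K *ᵥ y) := by
    rw [← h, add_mulVec, dotProduct_add]
  have hdiff := hM.dotProduct_mulVec_self_nonneg (x - y)
  rw [hsymm.dotProduct_mulVec_sub_sub] at hdiff
  linarith [hK.dotProduct_mulVec_self_nonneg y]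

end Matrix

theorem hodf2_nonexpansive_general {n : ℕ}
    (M S : Matrix (Fin n) (Fin n) ℝ)
    (hM : M.PosDef) (hS : S.PosSemidef) (δ : ℝ) (m : ℕ)
    (a abar : Fin n → ℝ)
    (hsol : (M + δ ^ 2 • S ^ m) *ᵥ abar = M *ᵥ a) :
    abar ⬝ᵥ (M *ᵥ abar) ≤ a ⬝ᵥ (M *ᵥ a) ∧
    Real.sqrt (abar ⬝ᵥ (M *ᵥ abar)) ≤ Real.sqrt (a ⬝ᵥ (M *ᵥ a)) := by
  have hK : (δ ^ 2 • S ^ m).PosSemidef := (hS.pow m).smul (sq_nonneg δ)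
  have hle := hM.posSemidef.dotProduct_mulVec_le_of_add_mulVec_eq hK hsol
  exact ⟨hle, Real.sqrt_le_sqrt hle⟩

/-- If `ā` solves the weak-form higher-order differential filter system
`(M + δ² Sᵐ) ā = M a`, then `āᵀ M ā ≤ aᵀ M a`, i.e. HODF version 2 is nonexpansive in
the `M`-weighted norm `‖x‖_M = √(xᵀ M x)`. -/
theorem hodf2_nonexpansive {n : ℕ}
    (M S : Matrix (Fin n) (Fin n) ℝ)
    (hM : M.PosDef) (hS : S.PosSemidef) (δ : ℝ) (m : ℕ) (hm : 1 ≤ m)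
    (a abar : Fin n → ℝ)
    (hsol : (M + δ ^ 2 • S ^ m) *ᵥ abar = M *ᵥ a) :
    abar ⬝ᵥ (M *ᵥ abar) ≤ a ⬝ᵥ (M *ᵥ a) ∧
    Real.sqrt (abar ⬝ᵥ (M *ᵥ abar)) ≤ Real.sqrt (a ⬝ᵥ (M *ᵥ a)) :=
  hodf2_nonexpansive_general M S hM hS δ m a abar hsol
end
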